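/- Let β_k = 2^k B_k / k! (so that 2x/(e^{2x} − 1) = Σ_{k≥0} β_k x^k, where B_k are the Bernoulli numbers), and for integers p ≥ 1 and k ≥ 0 set β_{k,p} := (−1)^p (p−1)! Σ_{0 ≤ i ≤ ⌊(p−1)/2⌋} β_{k+p−2i}/(2i+1)!. Then for all integers k ≥ 0 and p ≥ 1 the following recursions hold: 2p·β_{k+1, 2p} = −β_{k, 2p+1} − β_{k+1}/(2p+1), and (2p − 1)·β_{k+1, 2p−1} = −β_{k, 2p}. -/
import Mathlib


/-- `β_k = 2^k B_k / k!`, where `B_k` is the k-th Bernoulli number (with `B₁ = −1/2`). -/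
noncomputable def smallBeta (k : ℕ) : ℚ := 2 ^ k * bernoulli k / (Nat.factorial k)

/-- `β_{k,p} = (−1)^p (p−1)! Σ_{0 ≤ i ≤ ⌊(p−1)/2⌋} β_{k+p−2i}/(2i+1)!`. -/
noncomputable def betaKP (k p : ℕ) : ℚ :=
  (-1) ^ p * (Nat.factorial (p - 1)) *
    ∑ i ∈ Finset.range ((p - 1) / 2 + 1),
      smallBeta (k + p - 2 * i) / (Nat.factorial (2 * i + 1))

/-- the recursions `2p·β_{k+1,2p} = −β_{k,2p+1} − β_{k+1}/(2p+1)` and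
`(2p−1)·β_{k+1,2p−1} = −β_{k,2p}`. -/
theorem statement_9 (k p : ℕ) (hp : 1 ≤ p) :
    (2 * p : ℚ) * betaKP (k + 1) (2 * p)
        = -betaKP k (2 * p + 1) - smallBeta (k + 1) / (2 * p + 1) ∧
    ((2 * p : ℚ) - 1) * betaKP (k + 1) (2 * p - 1) = -betaKP k (2 * p) := by
  obtain ⟨q, rfl⟩ := Nat.exists_eq_add_of_le hp
  have e2 : 2 * (1 + q) = 2 * q + 2 := by omega
  have e1 : 2 * q + 2 - 1 = 2 * q + 1 := by omega
  have e3 : 2 * q + 2 + 1 = 2 * q + 3 := by omega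
  have e4 : 2 * q + 1 - 1 = 2 * q := by omega
  have e5 : 2 * q + 3 - 1 = 2 * q + 2 := by omega
  have e6 : 2 * q / 2 + 1 = q + 1 := by omega
  have e7 : (2 * q + 2) / 2 + 1 = q + 2 := by omega
  have e8 : (2 * q + 1) / 2 + 1 = q + 1 := by omega
  simp only [betaKP, e2, e1, e3, e4, e5, e6, e7, e8]
  have s1 : ((-1 : ℚ)) ^ (2 * q + 2) = 1 := Even.neg_one_pow ⟨q + 1, by ring⟩
  have s2 : ((-1 : ℚ)) ^ (2 * q + 3) = -1 := Odd.neg_one_pow ⟨q + 1, by ring⟩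
  have s3 : ((-1 : ℚ)) ^ (2 * q + 1) = -1 := Odd.neg_one_pow ⟨q, by ring⟩
  rw [s1, s2, s3]
  have h0 : ((2 * q + 1).factorial : ℚ) ≠ 0 := Nat.cast_ne_zero.2 (Nat.factorial_ne_zero _)
  constructor
  · have hA : ∀ x ∈ Finset.range (q + 1),
        smallBeta (k + 1 + (2 * q + 2) - 2 * x) / ((2 * x + 1).factorial : ℚ)
          = smallBeta (k + (2 * q + 3) - 2 * x) / ((2 * x + 1).factorial : ℚ) := by
      intro x _
      rw [show k + 1 + (2 * q + 2) - 2 * x = k + (2 * q + 3) - 2 * x from by omega]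
    have hS : ∑ x ∈ Finset.range (q + 2),
        smallBeta (k + (2 * q + 3) - 2 * x) / ((2 * x + 1).factorial : ℚ)
        = (∑ x ∈ Finset.range (q + 1),
            smallBeta (k + (2 * q + 3) - 2 * x) / ((2 * x + 1).factorial : ℚ))
          + smallBeta (k + 1) / ((2 * (q + 1) + 1).factorial : ℚ) := by
      rw [Finset.sum_range_succ, show k + (2 * q + 3) - 2 * (q + 1) = k + 1 from by omega]
    rw [Finset.sum_congr rfl hA, hS]
    have f1 : ((2 * q + 2).factorial : ℚ) = (2 * q + 2) * (2 * q + 1).factorial := by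
      rw [show 2 * q + 2 = (2 * q + 1) + 1 from by omega, Nat.factorial_succ]
      push_cast; ring
    have f2 : (((2 * (q + 1) + 1).factorial : ℕ) : ℚ)
        = (2 * q + 3) * ((2 * q + 2) * (2 * q + 1).factorial) := by
      rw [show 2 * (q + 1) + 1 = (2 * q + 2) + 1 from by omega, Nat.factorial_succ,
        show 2 * q + 2 = (2 * q + 1) + 1 from by omega, Nat.factorial_succ]
      push_cast; ring
    rw [f2, f1]
    have h1 : (2 * (q : ℚ) + 3) ≠ 0 := by positivity
    push_cast
    field_simp
    ring
  · have hA : ∀ x ∈ Finset.range (q + 1),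
        smallBeta (k + 1 + (2 * q + 1) - 2 * x) / ((2 * x + 1).factorial : ℚ)
          = smallBeta (k + (2 * q + 2) - 2 * x) / ((2 * x + 1).factorial : ℚ) := by
      intro x _
      rw [show k + 1 + (2 * q + 1) - 2 * x = k + (2 * q + 2) - 2 * x from by omega]
    rw [Finset.sum_congr rfl hA]
    have f1 : ((2 * q + 1).factorial : ℚ) = (2 * q + 1) * (2 * q).factorial := by
      rw [show 2 * q + 1 = (2 * q) + 1 from by omega, Nat.factorial_succ]
      push_cast; ring
    rw [f1]
    push_cast
    ring
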